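/- arXiv:1705.07504 — 6 statements merged into one kernel-verified Lean document; each statement's English description precedes it below -/
import Mathlib

section
/- Write (q^2;q)_∞ = Σ_{j≥0} a_j q^j. For every nonnegative integer j there exists a unique nonnegative integer n with p_2(2n) ≤ j < p_2(2n+2), and the coefficient a_j equals: 1 if p_2(2n) ≤ j < p_1(2n+1); -1 if p_2(2n+1) ≤ j < p_1(2n+2); and 0 otherwise. In particular, the power series (q^2;q)_∞ is of Bloch–Pólya type, i.e., every a_j lies in {-1, 0, 1}. -/
/-- The first family of pentagonal numbers, `p₁(n) = n(3n-1)/2`. -/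
def p1 (n : ℕ) : ℤ := (n * (3 * n - 1)) / 2

/-- The second family of pentagonal numbers, `p₂(n) = n(3n+1)/2`. -/
def p2 (n : ℕ) : ℤ := (n * (3 * n + 1)) / 2

/-- The infinite product `(q^a;q)_∞ = ∏_{i ≥ 0} (1 - q^{a+i})` in `ℤ[[q]]` (for `a ≥ 1`),
defined coefficientwise: factors `1 - q^{a+i}` with `a + i > n` do not affect the
coefficient of `q^n`, so the coefficient of `q^n` equals that of the partial product
`∏_{i ≤ n} (1 - q^{a+i})`. -/
noncomputable def pochInf (a : ℕ) : PowerSeries ℤ :=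
  PowerSeries.mk fun n =>
    (∏ i ∈ Finset.range (n + 1), (1 - Polynomial.X ^ (a + i)) : Polynomial ℤ).coeff n

/-- `a j` is the coefficient of `q^j` in `(q^2;q)_∞`. -/
noncomputable def a (j : ℕ) : ℤ := PowerSeries.coeff j (pochInf 2)

/-!
By Euler's pentagonal number theorem,
`(1 - q) (q²;q)_∞ = (q;q)_∞ = ∑_{k ∈ ℤ} (-1)^k q^{k(3k-1)/2}`,
so `a j` is the partial sum up to `q^j` of the pentagonal series. The exponents interleave as
`p₂(m) < p₁(m+1) < p₂(m+1)`, and the terms at `p₁(m)` and `p₂(m)` both carry the sign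
`(-1)^m`; hence the partial sums are `(-1)^m` on `[p₂(m), p₁(m+1))` and `0` on
`[p₁(m+1), p₂(m+1))`.
-/
open Finset PowerSeries

section

variable {R : Type*} [CommRing R]

theorem coeff_mul_one_sub_X_pow_of_lt (f : R⟦X⟧) {n m : ℕ} (h : n < m) :
    coeff n (f * (1 - X ^ m)) = coeff n f := by
  rw [mul_sub, mul_one, map_sub, coeff_mul_X_pow', if_neg (by omega), sub_zero]

theorem coeff_mul_congr_right (h : R⟦X⟧) {f g : R⟦X⟧} {n : ℕ}
    (hfg : ∀ i ≤ n, coeff i f = coeff i g) : coeff n (h * f) = coeff n (h * g) := by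
  simp only [coeff_mul]
  exact sum_congr rfl fun p hp => by rw [hfg p.2 (HasAntidiagonal.antidiagonal.snd_le hp)]

theorem coeff_eq_sum_range_of_one_sub_X_mul_eq {f g : R⟦X⟧} (h : (1 - X) * f = g) (n : ℕ) :
    coeff n f = ∑ i ∈ range (n + 1), coeff i g := by
  induction n with
  | zero => simp [← h]
  | succ n ih =>
    rw [sum_range_succ, ← ih, ← h, sub_mul, one_mul, map_sub, coeff_succ_X_mul]
    ring

theorem pentagonal_zero : pentagonal 0 = 0 := rfl

theorem coeff_pentagonalSeries_pentagonal_natCast (m : ℕ) :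
    coeff (pentagonal m) (pentagonalSeries R) = (-1) ^ m := by
  simp

theorem coeff_pentagonalSeries_pentagonal_neg_natCast (m : ℕ) :
    coeff (pentagonal (-m)) (pentagonalSeries R) = (-1) ^ m := by
  simp [Int.negOnePow_neg]

theorem eq_of_pentagonal_neg_lt_pentagonal_lt {m : ℕ} {k : ℤ}
    (h₁ : pentagonal (-m) < pentagonal k) (h₂ : pentagonal k < pentagonal (-(m + 1 : ℕ))) :
    k = m + 1 := by
  have hk := two_mul_natCast_pentagonal k
  have hm := two_mul_natCast_pentagonal_neg (m : ℤ)
  have hm₁ := two_mul_natCast_pentagonal_neg ((m : ℤ) + 1)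
  zify at h₁ h₂
  -- `k(3k-1) ≤ m(3m+1)` for `|k| ≤ m`, and `k(3k-1) ≥ (m+1)(3m+4)` otherwise unless `k = m+1`
  by_contra hne
  rcases lt_or_gt_of_ne hne with h | h
  · rcases le_or_gt (-(m : ℤ)) k with h' | h'
    · nlinarith
    · nlinarith
  · nlinarith

theorem coeff_pentagonalSeries_of_lt_of_lt {m i : ℕ} (h₁ : pentagonal (-m) < i)
    (h₂ : i < pentagonal (-(m + 1 : ℕ))) :
    coeff i (pentagonalSeries R) = if i = pentagonal (m + 1 : ℕ) then (-1) ^ (m + 1) else 0 := by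
  split_ifs with h
  · rw [h, coeff_pentagonalSeries_pentagonal_natCast]
  · refine coeff_pentagonalSeries_eq_zero R ?_
    rintro ⟨k, rfl⟩
    exact h (by rw [eq_of_pentagonal_neg_lt_pentagonal_lt h₁ h₂]; push_cast; rfl)

theorem sum_Ico_coeff_pentagonalSeries {m J : ℕ} (hJ : J ≤ pentagonal (-(m + 1 : ℕ))) :
    ∑ i ∈ Ico (pentagonal (-m) + 1) J, coeff i (pentagonalSeries R) =
      if pentagonal (m + 1 : ℕ) < J then (-1) ^ (m + 1) else 0 := by
  have hlt : pentagonal (-m) < pentagonal (m + 1 : ℕ) := by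
    exact_mod_cast pentagonal_neg_lt_pentagonal_add_one (Nat.cast_nonneg m)
  rw [sum_congr rfl fun i hi => coeff_pentagonalSeries_of_lt_of_lt (m := m)
    (by simp only [mem_Ico] at hi; omega) (by simp only [mem_Ico] at hi; omega), sum_ite_eq']
  simp only [mem_Ico, show pentagonal (-m) + 1 ≤ pentagonal (m + 1 : ℕ) from hlt, true_and]

theorem sum_range_coeff_pentagonalSeries_pentagonal_neg (m : ℕ) :
    ∑ i ∈ range (pentagonal (-m) + 1), coeff i (pentagonalSeries R) = (-1) ^ m := by
  induction m with
  | zero => simpa [pentagonal_zero] using coeff_pentagonalSeries_pentagonal R 0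
  | succ m ih =>
    have hlt : pentagonal (-m) < pentagonal (-(m + 1 : ℕ)) := by
      apply pentagonal_strictAntiOn <;> simp
    have hlt' : pentagonal (m + 1 : ℕ) < pentagonal (-(m + 1 : ℕ)) := by
      exact_mod_cast pentagonal_lt_pentagonal_neg (by omega)
    rw [← sum_range_add_sum_Ico _ (Nat.succ_le_succ hlt.le), sum_Ico_succ_top hlt, ih,
      sum_Ico_coeff_pentagonalSeries le_rfl, if_pos hlt',
      coeff_pentagonalSeries_pentagonal_neg_natCast]
    ring

theorem sum_range_coeff_pentagonalSeries {m j : ℕ} (h₁ : pentagonal (-m) ≤ j)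
    (h₂ : j < pentagonal (-(m + 1 : ℕ))) :
    ∑ i ∈ range (j + 1), coeff i (pentagonalSeries R) =
      if j < pentagonal (m + 1 : ℕ) then (-1) ^ m else 0 := by
  rw [← sum_range_add_sum_Ico _ (by omega : pentagonal (-m) + 1 ≤ j + 1),
    sum_range_coeff_pentagonalSeries_pentagonal_neg, sum_Ico_coeff_pentagonalSeries h₂]
  split_ifs <;> first | omega | ring

end

theorem coeff_prod_one_sub_X_pow_of_lt (a : ℕ) {n N : ℕ} (h : n < N) :
    coeff n (∏ i ∈ range N, (1 - X ^ (a + i)) : ℤ⟦X⟧) = coeff n (pochInf a) := by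
  induction N, h using Nat.le_induction with
  | base =>
    rw [pochInf, coeff_mk, ← Polynomial.coeff_coe, ← Polynomial.coeToPowerSeries.ringHom_apply,
      map_prod Polynomial.coeToPowerSeries.ringHom]
    simp
  | succ N hN ih => rw [prod_range_succ, coeff_mul_one_sub_X_pow_of_lt _ (by omega), ih]

theorem one_sub_X_mul_pochInf_two : (1 - X) * pochInf 2 = pentagonalSeries ℤ := by
  ext n
  obtain ⟨N, hpent, hN⟩ := ((Filter.tendsto_finset_range.eventually
    (coeff_prod_one_sub_X_pow_eventually_eq ℤ n)).and (Filter.eventually_gt_atTop (n + 1))).exists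
  obtain ⟨M, rfl⟩ := Nat.exists_eq_add_one_of_ne_zero (by omega : N ≠ 0)
  rw [← hpent, prod_range_succ', zero_add, pow_one, mul_comm _ (1 - X)]
  refine coeff_mul_congr_right (1 - X) fun i hi => ?_
  rw [← coeff_prod_one_sub_X_pow_of_lt 2 (by omega : i < M)]
  simp_rw [add_assoc, one_add_one_eq_two, add_comm 2]

theorem StrictMono.existsUnique_le_lt_succ {f : ℕ → ℕ} (hf : StrictMono f) {j : ℕ}
    (h₀ : f 0 ≤ j) : ∃! n, f n ≤ j ∧ j < f (n + 1) := by
  have hex : ∃ n, j < f (n + 1) := ⟨j, (hf.id_le (j + 1)).trans_lt' j.lt_succ_self⟩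
  refine ⟨Nat.find hex, ⟨?_, Nat.find_spec hex⟩, fun n ⟨hn₁, hn₂⟩ => ?_⟩
  · rcases Nat.eq_zero_or_eq_succ_pred (Nat.find hex) with h | h
    · rwa [h]
    · rw [h]
      exact not_lt.1 (Nat.find_min hex (by omega))
  · refine le_antisymm ?_ (Nat.find_min' hex hn₂)
    by_contra! h
    exact (Nat.find_spec hex).not_ge (hn₁.trans' (hf.monotone h))

theorem strictMono_pentagonal_neg_natCast : StrictMono fun m : ℕ => pentagonal (-m) :=
  strictMono_nat_of_lt_succ fun m => by apply pentagonal_strictAntiOn <;> simp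

theorem p1_eq_pentagonal (n : ℕ) : p1 n = pentagonal n := by
  rw [natCast_pentagonal, p1]

theorem p2_eq_pentagonal_neg (n : ℕ) : p2 n = pentagonal (-n) := by
  rw [natCast_pentagonal, p2]
  ring_nf

theorem coeff_pochInf_two {m j : ℕ} (h₁ : pentagonal (-m) ≤ j)
    (h₂ : j < pentagonal (-(m + 1 : ℕ))) :
    coeff j (pochInf 2) = if j < pentagonal (m + 1 : ℕ) then (-1) ^ m else 0 :=
  (coeff_eq_sum_range_of_one_sub_X_mul_eq one_sub_X_mul_pochInf_two j).trans
    (sum_range_coeff_pentagonalSeries h₁ h₂)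

theorem q2_pochhammer_coeffs :
    (∀ j : ℕ, ∃! n : ℕ, p2 (2 * n) ≤ (j : ℤ) ∧ (j : ℤ) < p2 (2 * n + 2)) ∧
    (∀ j n : ℕ, p2 (2 * n) ≤ (j : ℤ) → (j : ℤ) < p2 (2 * n + 2) →
      a j = if p2 (2 * n) ≤ (j : ℤ) ∧ (j : ℤ) < p1 (2 * n + 1) then 1
            else if p2 (2 * n + 1) ≤ (j : ℤ) ∧ (j : ℤ) < p1 (2 * n + 2) then -1
            else 0) ∧
    (∀ j : ℕ, a j ∈ ({-1, 0, 1} : Set ℤ)) := by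
  simp only [a, p1_eq_pentagonal, p2_eq_pentagonal_neg, Nat.cast_le, Nat.cast_lt]
  refine ⟨fun j => ?_, fun j n h₁ h₂ => ?_, fun j => ?_⟩
  · have hmono := strictMono_pentagonal_neg_natCast.comp (strictMono_mul_left_of_pos two_pos)
    simpa only [Function.comp_apply, mul_add_one] using
      hmono.existsUnique_le_lt_succ (j := j) (by simp [pentagonal_zero])
  · rcases lt_or_ge j (pentagonal (-(2 * n + 1 : ℕ))) with h | h
    · rw [coeff_pochInf_two h₁ h, pow_mul, neg_one_sq, one_pow]
      simp only [h₁, true_and, not_le.2 h, false_and, if_false]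
    · have hlt := pentagonal_lt_pentagonal_neg (k := (2 * n + 1 : ℕ)) (by omega)
      rw [coeff_pochInf_two h h₂, pow_succ, pow_mul, neg_one_sq, one_pow, one_mul]
      simp only [h, true_and, show ¬ j < pentagonal (2 * n + 1 : ℕ) by omega, and_false,
        if_false]
  · obtain ⟨m, h₁, h₂⟩ := (strictMono_pentagonal_neg_natCast.existsUnique_le_lt_succ
      (j := j) (by simp [pentagonal_zero])).exists
    rw [coeff_pochInf_two h₁ h₂]
    rcases neg_one_pow_eq_or ℤ m with h | h <;> split_ifs <;> simp [h]
end

section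
/- Write (q^3;q)_∞ = Σ_{i≥0} b_i q^i. Every integer c occurs as a coefficient of (q^3;q)_∞ infinitely many times; that is, for every c ∈ ℤ, the set {i ∈ ℕ : b_i = c} is infinite. -/
/-- `b i` is the coefficient of `q^i` in `(q^3;q)_∞`. -/
noncomputable def b (i : ℕ) : ℤ := PowerSeries.coeff i (pochInf 3)

/-!
By the pentagonal number theorem, `(q;q)_∞ = ∑ₖ (-1)ᵏ (q^{k(3k+1)/2} - q^{(k+1)(3k+2)/2})`, so
`(q²;q)_∞ = (q;q)_∞ / (1 - q)` has coefficient `(-1)ᵏ` on the block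
`[k(3k+1)/2, k(3k+1)/2 + 2k]` and `0` on the gap between consecutive blocks. Since
`(q²;q)_∞ = (1 - q²) (q³;q)_∞`, we get `b (n + 2) = b n + [q^{n+2}] (q²;q)_∞`, so along the even
indices `b` never drops by more than `1`. Walking through the blocks two at a time, `b` is about `t`
just before block `2t + 1` and `-(t + 1)` just after it, so along the even indices `b` is
unbounded in both directions and hits every integer infinitely often.
-/

open PowerSeries PowerSeries.WithPiTopology Filter

theorem coeff_pochInf_eq_coeff_prod (a : ℕ) {n N : ℕ} (h : n < N) :
    coeff n (pochInf a) = coeff n (∏ i ∈ Finset.range N, (1 - X ^ (a + i)) : ℤ⟦X⟧) := by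
  induction N, h using Nat.le_induction with
  | base =>
    rw [pochInf, coeff_mk, ← Polynomial.coeff_coe, ← Polynomial.coeToPowerSeries.ringHom_apply,
      map_prod]
    simp
  | succ N hN ih =>
    rw [Finset.prod_range_succ, mul_sub, mul_one, map_sub, coeff_mul_X_pow', if_neg (by omega),
      sub_zero, ih]

theorem multipliable_one_sub_X_pow_add (a : ℕ) :
    Multipliable fun i ↦ (1 - X ^ (a + i) : ℤ⟦X⟧) := by
  have h : Tendsto (fun i ↦ (-X ^ (a + i) : ℤ⟦X⟧).order) atTop (nhds ⊤) := by
    simp_rw [order_neg, order_X_pow]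
    exact ENat.tendsto_natCast_nhds_top.comp
      (tendsto_atTop_mono (fun i ↦ Nat.le_add_left i a) tendsto_id)
  simpa only [← sub_eq_add_neg] using multipliable_one_add_of_tendsto_order_atTop_nhds_top ℤ h

theorem pochInf_eq_tprod (a : ℕ) : pochInf a = ∏' i, (1 - X ^ (a + i) : ℤ⟦X⟧) := by
  ext n
  have hlim := (tendsto_iff_coeff_tendsto ℤ _ _ _).mp
    (multipliable_one_sub_X_pow_add a).hasProd.tendsto_prod_nat n
  refine tendsto_nhds_unique (tendsto_const_nhds.congr' ?_) hlim
  filter_upwards [eventually_gt_atTop n] with N hN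
  exact coeff_pochInf_eq_coeff_prod a hN

theorem pochInf_one : pochInf 1 = pentagonalSeries ℤ := by
  rw [pochInf_eq_tprod, ← tprod_one_sub_X_pow]
  simp_rw [add_comm 1]

theorem pochInf_eq_one_sub_X_pow_mul (a : ℕ) : pochInf a = (1 - X ^ a) * pochInf (a + 1) := by
  have h : Multipliable fun i ↦ (1 - X ^ (a + (i + 1)) : ℤ⟦X⟧) := by
    simpa only [add_assoc, add_comm 1] using multipliable_one_sub_X_pow_add (a + 1)
  rw [pochInf_eq_tprod, pochInf_eq_tprod,
    tprod_eq_zero_mul' (f := fun i ↦ (1 - X ^ (a + i) : ℤ⟦X⟧)) h]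
  simp only [add_zero, add_assoc, add_comm 1]

theorem pentagonal_natCast_add_one (k : ℕ) : pentagonal (k + 1) = pentagonal (-k) + 2 * k + 1 := by
  have h1 := two_mul_natCast_pentagonal (k + 1)
  have h2 := two_mul_natCast_pentagonal_neg k
  zify
  linarith

theorem pentagonal_neg_natCast_succ (k : ℕ) :
    pentagonal (-(k + 1 : ℕ)) = pentagonal (-k) + 3 * k + 2 := by
  have h1 := two_mul_natCast_pentagonal_neg (k + 1)
  have h2 := two_mul_natCast_pentagonal_neg k
  zify
  linarith

theorem exists_pentagonal_neg_le_lt (n : ℕ) :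
    ∃ k : ℕ, pentagonal (-k) ≤ n ∧ n < pentagonal (-(k + 1 : ℕ)) := by
  induction n with
  | zero => exact ⟨0, by decide⟩
  | succ n ih =>
    obtain ⟨k, h1, h2⟩ := ih
    by_cases h : n + 1 < pentagonal (-(k + 1 : ℕ))
    · exact ⟨k, by omega, h⟩
    · have := pentagonal_neg_natCast_succ (k + 1)
      exact ⟨k + 1, by omega, by omega⟩

theorem pochInf_two_eq : pochInf 2 = pentagonalSeries ℤ * mk 1 := by
  rw [← pochInf_one, pochInf_eq_one_sub_X_pow_mul 1, pow_one, mul_comm, ← mul_assoc,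
    mk_one_mul_one_sub_eq_one, one_mul]

theorem hasSum_coeff_pochInf_two (n : ℕ) :
    HasSum (fun k : ℕ ↦ (-1) ^ k *
      ((if pentagonal (-k) ≤ n then 1 else 0) - if pentagonal (k + 1) ≤ n then 1 else 0))
      (coeff n (pochInf 2)) := by
  have h := (hasSum_pow_pentagonal_sub_pentagonalSeries ℤ).mul_right (mk 1)
  rw [← pochInf_two_eq, hasSum_iff_hasSum_coeff] at h
  have hk (k : ℕ) :
      coeff n ((-1 : ℤ⟦X⟧) ^ k * (X ^ pentagonal (-k) - X ^ pentagonal (k + 1)) * mk 1) =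
        (-1) ^ k *
          ((if pentagonal (-k) ≤ n then 1 else 0) - if pentagonal (k + 1) ≤ n then 1 else 0) := by
    rw [mul_assoc, show ((-1) ^ k : ℤ⟦X⟧) = C ((-1) ^ k) by simp, coeff_C_mul]
    simp [sub_mul, coeff_X_pow_mul']
  simpa only [hk] using h n

theorem coeff_pochInf_two_eq_ite {k n : ℕ} (h1 : pentagonal (-k) ≤ n)
    (h2 : n < pentagonal (-(k + 1 : ℕ))) :
    coeff n (pochInf 2) = if n < pentagonal (-k) + 2 * k + 1 then (-1) ^ k else 0 := by
  refine (hasSum_coeff_pochInf_two n).unique (hasSum_single k fun j hj ↦ ?_) |>.trans ?_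
  · have hQ := pentagonal_natCast_add_one j
    rcases Nat.lt_or_gt_of_ne hj with hjk | hkj
    · have := pentagonal_neg_natCast_succ j
      have : pentagonal (-(j + 1 : ℕ)) ≤ pentagonal (-k) :=
        pentagonal_strictAntiOn.antitoneOn (by simp) (by simp) (by omega)
      simp [show pentagonal (-j) ≤ n by omega, show pentagonal (j + 1) ≤ n by omega]
    · have : pentagonal (-(k + 1 : ℕ)) ≤ pentagonal (-j) :=
        pentagonal_strictAntiOn.antitoneOn (by simp) (by simp) (by omega)
      simp [show ¬ pentagonal (-j) ≤ n by omega, show ¬ pentagonal (j + 1) ≤ n by omega]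
  · have := pentagonal_natCast_add_one k
    split_ifs <;> omega

theorem neg_one_le_coeff_pochInf_two (n : ℕ) : -1 ≤ coeff n (pochInf 2) := by
  obtain ⟨k, h1, h2⟩ := exists_pentagonal_neg_le_lt n
  rw [coeff_pochInf_two_eq_ite h1 h2]
  rcases neg_one_pow_eq_or ℤ k with h | h <;> split_ifs <;> omega

theorem coeff_pochInf_add (a n : ℕ) :
    coeff (n + a) (pochInf a) = coeff (n + a) (pochInf (a + 1)) - coeff n (pochInf (a + 1)) := by
  rw [pochInf_eq_one_sub_X_pow_mul a, sub_mul, one_mul, map_sub, coeff_X_pow_mul',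
    if_pos (Nat.le_add_left a n), Nat.add_sub_cancel]

theorem b_add_two (n : ℕ) : b (n + 2) = b n + coeff (n + 2) (pochInf 2) := by
  rw [coeff_pochInf_add 2 n, b, b]
  ring

theorem b_add_two_mul {s : ℤ} {m i : ℕ} (h : ∀ j < i, coeff (m + 2 * j + 2) (pochInf 2) = s) :
    b (m + 2 * i) = b m + i * s := by
  induction i with
  | zero => simp
  | succ i ih =>
    rw [show m + 2 * (i + 1) = m + 2 * i + 2 by ring, b_add_two, ih fun j hj ↦ h j (by omega),
      h i (by omega)]
    push_cast
    ring

theorem b_eq_add_of_block {k m n : ℕ} (i : ℕ) (hn : n = m + 2 * i) (hm : pentagonal (-k) ≤ m + 2)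
    (hn' : n < pentagonal (-k) + 2 * k + 1) : b n = b m + i * (-1) ^ k := by
  have := pentagonal_neg_natCast_succ k
  subst hn
  exact b_add_two_mul fun j hj ↦ by
    rw [coeff_pochInf_two_eq_ite (k := k) (by omega) (by omega), if_pos (by omega)]

theorem b_eq_of_gap {k m n : ℕ} (i : ℕ) (hn : n = m + 2 * i)
    (hm : pentagonal (-k) + 2 * k + 1 ≤ m + 2) (hn' : n < pentagonal (-(k + 1 : ℕ))) :
    b n = b m := by
  subst hn
  simpa using b_add_two_mul (s := 0) (i := i) fun j hj ↦ by
    rw [coeff_pochInf_two_eq_ite (k := k) (by omega) (by omega), if_neg (by omega)]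

theorem b_pentagonal_neg_add_of_sub (t : ℕ) (h : b (pentagonal (-(2 * t + 1 : ℕ)) - 2) = t + 1 ∧
    b (pentagonal (-(2 * t + 1 : ℕ)) - 1) = t) :
    b (pentagonal (-(2 * t + 1 : ℕ)) + 4 * t + 1) = -(t + 1) ∧
      b (pentagonal (-(2 * t + 1 : ℕ)) + 4 * t + 2) = -(t + 1) := by
  have := pentagonal_neg_natCast_succ (2 * t)
  have hs : (-1 : ℤ) ^ (2 * t + 1) = -1 := Odd.neg_one_pow ⟨t, rfl⟩
  constructor
  · rw [b_eq_add_of_block (k := 2 * t + 1) (m := pentagonal (-(2 * t + 1 : ℕ)) - 1) (2 * t + 1)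
      (by omega) (by omega) (by omega), h.2, hs]
    push_cast
    ring
  · rw [b_eq_add_of_block (k := 2 * t + 1) (m := pentagonal (-(2 * t + 1 : ℕ)) - 2) (2 * t + 2)
      (by omega) (by omega) (by omega), h.1, hs]
    push_cast
    ring

theorem b_pentagonal_neg_sub (t : ℕ) :
    b (pentagonal (-(2 * t + 1 : ℕ)) - 2) = t + 1 ∧ b (pentagonal (-(2 * t + 1 : ℕ)) - 1) = t := by
  induction t with
  | zero =>
    rw [show pentagonal (-(2 * 0 + 1 : ℕ)) = 2 by decide]
    simp [b, pochInf, Finset.prod_range_succ, mul_sub, sub_mul, ← pow_add, Polynomial.coeff_one,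
      Polynomial.coeff_X_pow]
  | succ t ih =>
    have hend := b_pentagonal_neg_add_of_sub t ih
    rw [show 2 * (t + 1) + 1 = 2 * t + 1 + 1 + 1 by ring]
    have hrec₁ := pentagonal_neg_natCast_succ (2 * t + 1)
    have hrec₂ := pentagonal_neg_natCast_succ (2 * t + 1 + 1)
    generalize hP : pentagonal (-(2 * t + 1 : ℕ)) = P at ih hend hrec₁ hrec₂ ⊢
    generalize hP' : pentagonal (-(2 * t + 1 + 1 : ℕ)) = P' at hrec₁ hrec₂ ⊢
    generalize hP'' : pentagonal (-(2 * t + 1 + 1 + 1 : ℕ)) = P'' at hrec₂ ⊢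
    have hs : (-1 : ℤ) ^ (2 * t + 1 + 1) = 1 := Even.neg_one_pow ⟨t + 1, by ring⟩
    -- The gap before block `2t + 2` has even length and keeps the last two values, the one after
    -- it has odd length and swaps them.
    have hgap₁ : b (P' - 2) = b (P + 4 * t + 1) :=
      b_eq_of_gap (k := 2 * t + 1) (t + 1) (by omega) (by omega) (by omega)
    have hgap₂ : b (P' - 1) = b (P + 4 * t + 2) :=
      b_eq_of_gap (k := 2 * t + 1) (t + 1) (by omega) (by omega) (by omega)
    have hblock₁ : b (P' + 4 * t + 4) = b (P' - 2) + (2 * t + 3 : ℕ) * (-1) ^ (2 * t + 1 + 1) :=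
      b_eq_add_of_block (2 * t + 3) (by omega) (by omega) (by omega)
    have hblock₂ : b (P' + 4 * t + 3) = b (P' - 1) + (2 * t + 2 : ℕ) * (-1) ^ (2 * t + 1 + 1) :=
      b_eq_add_of_block (2 * t + 2) (by omega) (by omega) (by omega)
    have hgap₃ : b (P'' - 2) = b (P' + 4 * t + 4) :=
      b_eq_of_gap (k := 2 * t + 1 + 1) (t + 1) (by omega) (by omega) (by omega)
    have hgap₄ : b (P'' - 1) = b (P' + 4 * t + 3) :=
      b_eq_of_gap (k := 2 * t + 1 + 1) (t + 2) (by omega) (by omega) (by omega)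
    rw [hgap₃, hgap₄, hblock₁, hblock₂, hgap₁, hgap₂, hend.1, hend.2, hs]
    push_cast
    constructor <;> ring

theorem frequently_eq_of_sub_one_le {f : ℕ → ℤ} (hf : ∀ n, f n - 1 ≤ f (n + 1)) {c : ℤ}
    (hge : ∃ᶠ n in atTop, c ≤ f n) (hle : ∃ᶠ n in atTop, f n ≤ c) : ∃ᶠ n in atTop, f n = c := by
  rw [frequently_atTop] at *
  intro N
  obtain ⟨n₀, hn₀, hc⟩ := hge N
  obtain ⟨n₁, hn₁, hc'⟩ := hle n₀
  induction n₁, hn₁ using Nat.le_induction with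
  | base => exact ⟨n₀, hn₀, le_antisymm hc' hc⟩
  | succ n hn ih =>
    by_cases hfn : f n ≤ c
    · exact ih hfn
    · exact ⟨n + 1, by omega, by linarith [hf n]⟩

theorem frequently_le_b_two_mul (c : ℤ) : ∃ᶠ m in atTop, c ≤ b (2 * m) := by
  refine frequently_atTop.2 fun N ↦ ?_
  set t := N + c.toNat
  have := pentagonal_neg_natCast_succ (2 * t)
  obtain ⟨h₂, h₁⟩ := b_pentagonal_neg_sub t
  generalize pentagonal (-(2 * t + 1 : ℕ)) = P at *
  obtain ⟨m, hm⟩ : ∃ m, 2 * m = P - 2 ∨ 2 * m = P - 1 := ⟨(P - 1) / 2, by omega⟩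
  refine ⟨m, by omega, ?_⟩
  rcases hm with hm | hm <;> rw [hm] <;> omega

theorem frequently_b_two_mul_le (c : ℤ) : ∃ᶠ m in atTop, b (2 * m) ≤ c := by
  refine frequently_atTop.2 fun N ↦ ?_
  set t := N + (-c).toNat
  obtain ⟨h₁, h₂⟩ := b_pentagonal_neg_add_of_sub t (b_pentagonal_neg_sub t)
  generalize pentagonal (-(2 * t + 1 : ℕ)) = P at *
  obtain ⟨m, hm⟩ : ∃ m, 2 * m = P + 4 * t + 1 ∨ 2 * m = P + 4 * t + 2 :=
    ⟨(P + 4 * t + 2) / 2, by omega⟩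
  refine ⟨m, by omega, ?_⟩
  rcases hm with hm | hm <;> rw [hm] <;> omega

theorem every_integer_occurs_infinitely_often :
    ∀ c : ℤ, {i : ℕ | b i = c}.Infinite := by
  intro c
  have hstep (m : ℕ) : b (2 * m) - 1 ≤ b (2 * (m + 1)) := by
    rw [mul_add, mul_one, b_add_two]
    linarith [neg_one_le_coeff_pochInf_two (2 * m + 2)]
  have hfreq := frequently_eq_of_sub_one_le hstep (frequently_le_b_two_mul c)
    (frequently_b_two_mul_le c)
  refine ((Nat.frequently_atTop_iff_infinite.mp hfreq).image
    (mul_right_injective₀ two_ne_zero).injOn).mono ?_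
  rintro _ ⟨m, hm, rfl⟩
  exact hm
end

section
/- For all positive integers k and M, the polynomial identity q^{k+1} F_{k+1,M}(q) = 1 + (q^k - 1) F_{k,M}(q) - q^{k(M+1)} (q;q)_{M+1} holds in ℤ[q]. -/
/-- The finite q-Pochhammer symbol `(q;q)_m = ∏_{i=1}^{m} (1 - q^i)` as a polynomial in `ℤ[q]`. -/
noncomputable def qPoch (m : ℕ) : Polynomial ℤ :=
  ∏ i ∈ Finset.range m, (1 - Polynomial.X ^ (i + 1))

/-- `F_{k,M}(q) = Σ_{j=0}^{M} q^{kj} (q;q)_j` as a polynomial in `ℤ[q]`. -/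
noncomputable def Fpoly (k M : ℕ) : Polynomial ℤ :=
  ∑ j ∈ Finset.range (M + 1), Polynomial.X ^ (k * j) * qPoch j

theorem Fpoly_recurrence (k M : ℕ) (hk : 1 ≤ k) (hM : 1 ≤ M) :
    Polynomial.X ^ (k + 1) * Fpoly (k + 1) M =
      1 + (Polynomial.X ^ k - 1) * Fpoly k M
        - Polynomial.X ^ (k * (M + 1)) * qPoch (M + 1) := by
  clear hk hM
  induction M with
  | zero =>
    simp only [Fpoly, qPoch, Finset.sum_range_succ, Finset.sum_range_zero,
      Finset.prod_range_succ, Finset.prod_range_zero]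
    ring
  | succ n ih =>
    have e1 : Fpoly (k+1) (n+1) = Fpoly (k+1) n
        + Polynomial.X ^ ((k+1) * (n+1)) * qPoch (n+1) := by
      simp [Fpoly, Finset.sum_range_succ]
    have e2 : Fpoly k (n+1) = Fpoly k n
        + Polynomial.X ^ (k * (n+1)) * qPoch (n+1) := by
      simp [Fpoly, Finset.sum_range_succ]
    have e3 : qPoch (n+2) = qPoch (n+1) * (1 - Polynomial.X ^ (n+2)) := by
      simp [qPoch, Finset.prod_range_succ]
    rw [e1, e2, e3]
    linear_combination ih
end

section
/- For every integer k ≥ 1, the identity q^{k(k+1)/2} F_k(q) = Σ_{i=0}^{k-1} (-1)^i (q^{k-i};q)_i q^{(k-1-i)(k-i)/2} + (-1)^k (q;q)_{k-1} (q;q)_∞ holds in the ring ℤ[[q]] of formal power series, where (q^{k-i};q)_i = ∏_{s=0}^{i-1}(1 - q^{k-i+s}). -/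
/-- The formal power series `F_k(q) = Σ_{j ≥ 0} q^{kj} (q;q)_j ∈ ℤ[[q]]` (for `k ≥ 1`),
defined coefficientwise: the term with index `j` is divisible by `q^{kj}`,
so only terms with `j ≤ n` contribute to the coefficient of `q^n`. -/
noncomputable def Fser (k : ℕ) : PowerSeries ℤ :=
  PowerSeries.mk fun n =>
    (∑ j ∈ Finset.range (n + 1), Polynomial.X ^ (k * j) * qPoch j : Polynomial ℤ).coeff n

/-- `(q^{k-i};q)_i = ∏_{s=0}^{i-1} (1 - q^{k-i+s})` as a polynomial in `ℤ[q]`. -/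
noncomputable def qPochShift (k i : ℕ) : Polynomial ℤ :=
  ∏ s ∈ Finset.range i, (1 - Polynomial.X ^ (k - i + s))

/-!
Telescoping `q^{kj}(q;q)_j - q^{k(j+1)}(q;q)_{j+1} = (1 - q^k) q^{kj}(q;q)_j + q^{(k+1)(j+1)}(q;q)_j`
over `j` gives `(1 - q^k) F_k + q^{k+1} F_{k+1} = 1` for `k ≥ 1`, and for `k = 0` (where the
boundary term `(q;q)_j` no longer tends to `0`) gives `q F_1 = 1 - (q;q)_∞`. The latter is the case
`k = 1` of the theorem; the former, multiplied by `q^{k(k+1)/2}`, is its induction step, since the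
finite sum `A_k` on the right obeys `A_{k+1} = q^{k(k+1)/2} - (1 - q^k) A_k`.
-/

open Polynomial

noncomputable def FserPartial (k M : ℕ) : ℤ[X] :=
  ∑ j ∈ Finset.range M, X ^ (k * j) * qPoch j

lemma qPoch_succ (m : ℕ) : qPoch (m + 1) = qPoch m * (1 - X ^ (m + 1)) :=
  Finset.prod_range_succ _ _

lemma FserPartial_succ (k m : ℕ) :
    FserPartial k (m + 1) = FserPartial k m + X ^ (k * m) * qPoch m :=
  Finset.sum_range_succ _ _

lemma FserPartial_telescope (k M : ℕ) :
    (1 - X ^ k) * FserPartial k M + X ^ (k + 1) * FserPartial (k + 1) M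
      = 1 - X ^ (k * M) * qPoch M := by
  induction M with
  | zero => simp [FserPartial, qPoch]
  | succ m ih =>
    rw [FserPartial_succ, FserPartial_succ, qPoch_succ]
    linear_combination ih

lemma coeff_qPoch_of_lt {d M : ℕ} (h : d < M) : (qPoch M).coeff d = (qPoch (d + 1)).coeff d := by
  induction M, h using Nat.le_induction with
  | base => rfl
  | succ m hm ih =>
    rw [qPoch_succ, mul_sub, mul_one, coeff_sub, coeff_mul_X_pow', if_neg (by omega), sub_zero, ih]

lemma coeff_FserPartial_of_lt {k d M : ℕ} (hk : 1 ≤ k) (h : d < M) :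
    (FserPartial k M).coeff d = (FserPartial k (d + 1)).coeff d := by
  induction M, h using Nat.le_induction with
  | base => rfl
  | succ m hm ih =>
    have hm : d < k * m := lt_of_lt_of_le hm (Nat.le_mul_of_pos_left m hk)
    rw [FserPartial_succ, coeff_add, coeff_X_pow_mul', if_neg (by omega), add_zero, ih]

lemma PowerSeries.eq_of_forall_X_pow_dvd_sub {R : Type*} [CommRing R] {f g : PowerSeries R}
    (h : ∀ M, PowerSeries.X ^ M ∣ f - g) : f = g := by
  rw [← sub_eq_zero]
  ext n
  simpa using PowerSeries.X_pow_dvd_iff.mp (h (n + 1)) n n.lt_succ_self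

lemma X_pow_dvd_Fser_sub_FserPartial {k : ℕ} (hk : 1 ≤ k) (M : ℕ) :
    PowerSeries.X ^ M ∣ Fser k - (FserPartial k M : PowerSeries ℤ) := by
  refine PowerSeries.X_pow_dvd_iff.mpr fun d hd => ?_
  rw [map_sub, coeff_coe, coeff_FserPartial_of_lt hk hd, sub_eq_zero, Fser, PowerSeries.coeff_mk]
  rfl

lemma X_pow_dvd_pochInf_one_sub_qPoch (M : ℕ) :
    PowerSeries.X ^ M ∣ pochInf 1 - (qPoch M : PowerSeries ℤ) := by
  refine PowerSeries.X_pow_dvd_iff.mpr fun d hd => ?_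
  rw [map_sub, coeff_coe, coeff_qPoch_of_lt hd, sub_eq_zero, pochInf, PowerSeries.coeff_mk, qPoch]
  simp_rw [add_comm 1]

lemma X_mul_Fser_one : PowerSeries.X * Fser 1 = 1 - pochInf 1 := by
  refine PowerSeries.eq_of_forall_X_pow_dvd_sub fun M => ?_
  have htele : PowerSeries.X * (FserPartial 1 M : PowerSeries ℤ) = 1 - (qPoch M : PowerSeries ℤ) := by
    simpa using congrArg (fun p : ℤ[X] => (p : PowerSeries ℤ)) (FserPartial_telescope 0 M)
  have hsplit : PowerSeries.X * Fser 1 - (1 - pochInf 1)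
      = PowerSeries.X * (Fser 1 - (FserPartial 1 M : PowerSeries ℤ))
        + (pochInf 1 - (qPoch M : PowerSeries ℤ)) := by
    linear_combination htele
  rw [hsplit]
  exact dvd_add (dvd_mul_of_dvd_right (X_pow_dvd_Fser_sub_FserPartial le_rfl M) _)
    (X_pow_dvd_pochInf_one_sub_qPoch M)

lemma one_sub_X_pow_mul_Fser_add {k : ℕ} (hk : 1 ≤ k) :
    (1 - PowerSeries.X ^ k) * Fser k + PowerSeries.X ^ (k + 1) * Fser (k + 1) = 1 := by
  refine PowerSeries.eq_of_forall_X_pow_dvd_sub fun M => ?_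
  have htele := congrArg (fun p : ℤ[X] => (p : PowerSeries ℤ)) (FserPartial_telescope k M)
  simp only [coe_add, coe_sub, coe_mul, coe_pow, coe_one, coe_X] at htele
  have hsplit : (1 - PowerSeries.X ^ k) * Fser k + PowerSeries.X ^ (k + 1) * Fser (k + 1) - 1
      = (1 - PowerSeries.X ^ k) * (Fser k - (FserPartial k M : PowerSeries ℤ))
        + PowerSeries.X ^ (k + 1) * (Fser (k + 1) - (FserPartial (k + 1) M : PowerSeries ℤ))
        - PowerSeries.X ^ (k * M) * (qPoch M : PowerSeries ℤ) := by
    linear_combination htele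
  rw [hsplit]
  refine dvd_sub (dvd_add ?_ ?_) (dvd_mul_of_dvd_left (pow_dvd_pow _ (Nat.le_mul_of_pos_left M hk)) _)
  · exact dvd_mul_of_dvd_right (X_pow_dvd_Fser_sub_FserPartial hk M) _
  · exact dvd_mul_of_dvd_right (X_pow_dvd_Fser_sub_FserPartial (by omega) M) _

lemma qPochShift_succ {k i : ℕ} (h : i ≤ k) :
    qPochShift (k + 1) (i + 1) = qPochShift k i * (1 - X ^ k) := by
  rw [qPochShift, Finset.prod_range_succ, Nat.add_sub_add_right, Nat.sub_add_cancel h]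
  rfl

lemma sum_qPochShift_succ (k : ℕ) :
    (∑ i ∈ Finset.range (k + 1),
        (-1 : ℤ[X]) ^ i * qPochShift (k + 1) i * X ^ ((k + 1 - 1 - i) * (k + 1 - i) / 2))
      = X ^ (k * (k + 1) / 2) - (1 - X ^ k) * ∑ i ∈ Finset.range k,
          (-1 : ℤ[X]) ^ i * qPochShift k i * X ^ ((k - 1 - i) * (k - i) / 2) := by
  rw [Finset.sum_range_succ', Finset.mul_sum, sub_eq_add_neg, ← Finset.sum_neg_distrib]
  have hfirst : (-1 : ℤ[X]) ^ 0 * qPochShift (k + 1) 0 * X ^ ((k + 1 - 1 - 0) * (k + 1 - 0) / 2)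
      = X ^ (k * (k + 1) / 2) := by
    simp [qPochShift]
  rw [hfirst, add_comm]
  congr 1
  refine Finset.sum_congr rfl fun i hi => ?_
  have hi : i < k := Finset.mem_range.mp hi
  rw [qPochShift_succ hi.le, show k + 1 - 1 - (i + 1) = k - 1 - i by omega,
    show k + 1 - (i + 1) = k - i by omega]
  ring

theorem Fser_recurrence (k : ℕ) (hk : 1 ≤ k) :
    (PowerSeries.X : PowerSeries ℤ) ^ (k * (k + 1) / 2) * Fser k =
      ((∑ i ∈ Finset.range k,
          (-1 : Polynomial ℤ) ^ i * qPochShift k i *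
            Polynomial.X ^ ((k - 1 - i) * (k - i) / 2) : Polynomial ℤ) : PowerSeries ℤ)
        + (-1 : PowerSeries ℤ) ^ k * ((qPoch (k - 1) : Polynomial ℤ) : PowerSeries ℤ)
          * pochInf 1 := by
  obtain ⟨n, rfl⟩ := Nat.exists_eq_add_of_le' hk
  clear hk
  induction n with
  | zero =>
    simp [qPochShift, qPoch, X_mul_Fser_one, sub_eq_add_neg]
  | succ n ih =>
    have htriangle : (n + 1 + 1) * (n + 1 + 1 + 1) / 2 = (n + 1) * (n + 1 + 1) / 2 + (n + 1 + 1) := by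
      rw [show (n + 1 + 1) * (n + 1 + 1 + 1) = (n + 1) * (n + 1 + 1) + 2 * (n + 1 + 1) by ring,
        Nat.add_mul_div_left _ _ two_pos]
    have hstep := eq_sub_of_add_eq' (one_sub_X_pow_mul_Fser_add (Nat.le_add_left 1 n))
    calc PowerSeries.X ^ ((n + 1 + 1) * (n + 1 + 1 + 1) / 2) * Fser (n + 1 + 1)
        = PowerSeries.X ^ ((n + 1) * (n + 1 + 1) / 2)
            * (PowerSeries.X ^ (n + 1 + 1) * Fser (n + 1 + 1)) := by
          rw [htriangle, pow_add, mul_assoc]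
      _ = PowerSeries.X ^ ((n + 1) * (n + 1 + 1) / 2)
            - (1 - PowerSeries.X ^ (n + 1))
              * (PowerSeries.X ^ ((n + 1) * (n + 1 + 1) / 2) * Fser (n + 1)) := by
          rw [hstep]; ring
      _ = _ := by
          rw [ih, sum_qPochShift_succ (n + 1), Nat.add_sub_cancel, Nat.add_sub_cancel, qPoch_succ]
          push_cast
          ring
end

section
/- Both formal power series F_3(q) - q^9 and F_4(q) - q^{16} + q^{18} + q^{30} - q^{31} are of Bloch–Pólya type, i.e., all of their coefficients lie in {-1, 0, 1}. -/
open Finset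
open scoped Polynomial PowerSeries

section Polynomial

open Polynomial

/-- `(q^a; q)_n`, with factors written `1 - X ^ (i + a)` so that `qPochhammer 1` is `qPoch`
by definition. -/
noncomputable def qPochhammer (a n : ℕ) : ℤ[X] :=
  ∏ i ∈ range n, (1 - X ^ (i + a))

noncomputable def qPochSumTrunc (a b N : ℕ) : ℤ[X] :=
  ∑ j ∈ range (N + 1), X ^ (b * j) * qPochhammer a j

theorem qPochhammer_succ (a n : ℕ) :
    qPochhammer a (n + 1) = qPochhammer a n * (1 - X ^ (n + a)) :=
  prod_range_succ _ _

theorem qPochhammer_succ' (a n : ℕ) :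
    qPochhammer a (n + 1) = (1 - X ^ a) * qPochhammer (a + 1) n := by
  simp only [qPochhammer, prod_range_succ', zero_add, add_right_comm _ 1 a, add_assoc]
  ring

theorem qPochSumTrunc_succ (a b N : ℕ) :
    qPochSumTrunc a b (N + 1) = qPochSumTrunc a b N + X ^ (b * (N + 1)) * qPochhammer a (N + 1) :=
  sum_range_succ _ _

theorem qPochSumTrunc_succ_eq_first (a b N : ℕ) :
    qPochSumTrunc a b (N + 1) = 1 + (X ^ b - X ^ (b + a)) * qPochSumTrunc (a + 1) b N := by
  have hterm (j : ℕ) : X ^ (b * (j + 1)) * qPochhammer a (j + 1) =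
      (X ^ b - X ^ (b + a)) * (X ^ (b * j) * qPochhammer (a + 1) j) := by
    rw [qPochhammer_succ']
    ring
  simp only [qPochSumTrunc, sum_range_succ' _ (N + 1), hterm, ← mul_sum]
  simp [qPochhammer, add_comm]

theorem qPochSumTrunc_succ_eq_last (a b N : ℕ) :
    qPochSumTrunc a b (N + 1) =
      1 + X ^ b * qPochSumTrunc a b N - X ^ (b + a) * qPochSumTrunc a (b + 1) N := by
  have hterm (j : ℕ) : X ^ (b * (j + 1)) * qPochhammer a (j + 1) =
      X ^ b * (X ^ (b * j) * qPochhammer a j) -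
        X ^ (b + a) * (X ^ ((b + 1) * j) * qPochhammer a j) := by
    rw [qPochhammer_succ]
    ring
  simp only [qPochSumTrunc, sum_range_succ' _ (N + 1), hterm, sum_sub_distrib, mul_sum]
  simp [qPochhammer]
  ring

end Polynomial

/-- `Σ_j q^{bj} (q^a; q)_j`, read off from truncations as `Fser` is; this is only the intended
series when `1 ≤ b`. -/
noncomputable def qPochSum (a b : ℕ) : ℤ⟦X⟧ :=
  PowerSeries.mk fun n => (qPochSumTrunc a b n).coeff n

theorem Fser_eq_qPochSum (k : ℕ) : Fser k = qPochSum 1 k := rfl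

section PowerSeries

open PowerSeries

variable {a b : ℕ}

theorem coeff_qPochSum (hb : 1 ≤ b) {n N : ℕ} (hN : n ≤ N) :
    coeff n (qPochSum a b) = (qPochSumTrunc a b N).coeff n := by
  induction N, hN using Nat.le_induction with
  | base => exact coeff_mk _ _
  | succ N hN ih =>
    rw [ih, qPochSumTrunc_succ, Polynomial.coeff_add, Polynomial.coeff_X_pow_mul',
      if_neg (by nlinarith), add_zero]

theorem coeff_mul_qPochSum (hb : 1 ≤ b) (φ : ℤ⟦X⟧) (n : ℕ) :
    coeff n (φ * qPochSum a b) = coeff n (φ * (qPochSumTrunc a b n : ℤ⟦X⟧)) := by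
  simp only [coeff_mul]
  refine sum_congr rfl fun ij hij => ?_
  rw [coeff_qPochSum hb (HasAntidiagonal.antidiagonal.snd_le hij), Polynomial.coeff_coe]

theorem qPochSum_eq_first (hb : 1 ≤ b) :
    qPochSum a b = 1 + (X ^ b - X ^ (b + a)) * qPochSum (a + 1) b := by
  ext n
  rw [coeff_qPochSum hb n.le_succ, qPochSumTrunc_succ_eq_first, ← Polynomial.coeff_coe]
  push_cast
  simp only [map_add, coeff_mul_qPochSum hb]

theorem qPochSum_eq_last (hb : 1 ≤ b) :
    qPochSum a b = 1 + X ^ b * qPochSum a b - X ^ (b + a) * qPochSum a (b + 1) := by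
  ext n
  rw [coeff_qPochSum hb n.le_succ, qPochSumTrunc_succ_eq_last, ← Polynomial.coeff_coe]
  push_cast
  simp only [map_add, map_sub, coeff_mul_qPochSum hb, coeff_mul_qPochSum (Nat.le_add_left 1 b)]

theorem qPochSum_self {m : ℕ} (hm : 1 ≤ m) :
    qPochSum m m = 1 + X ^ m - X ^ (3 * m + 1) * qPochSum (m + 1) (m + 1) := by
  have first := qPochSum_eq_first (a := m) hm
  have last := qPochSum_eq_last (a := m + 1) hm
  linear_combination first + X ^ m * last

end PowerSeries

def IsBlochPolya (f : ℤ⟦X⟧) : Prop :=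
  ∀ n, PowerSeries.coeff n f ∈ ({-1, 0, 1} : Set ℤ)

section BlochPolya

open PowerSeries

theorem neg_mem_neg_one_zero_one {x : ℤ} (hx : x ∈ ({-1, 0, 1} : Set ℤ)) :
    -x ∈ ({-1, 0, 1} : Set ℤ) := by
  simp only [Set.mem_insert_iff, Set.mem_singleton_iff] at hx ⊢
  omega

theorem IsBlochPolya.neg {f : ℤ⟦X⟧} (hf : IsBlochPolya f) : IsBlochPolya (-f) := fun n => by
  rw [map_neg]
  exact neg_mem_neg_one_zero_one (hf n)

theorem coeff_add_X_pow_mul_mem {f g : ℤ⟦X⟧} {d n : ℕ}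
    (hf : coeff n f ∈ ({-1, 0, 1} : Set ℤ)) (hfd : d ≤ n → coeff n f = 0)
    (hg : d ≤ n → coeff (n - d) g ∈ ({-1, 0, 1} : Set ℤ)) :
    coeff n (f + X ^ d * g) ∈ ({-1, 0, 1} : Set ℤ) := by
  rw [map_add, coeff_X_pow_mul']
  split_ifs with h
  · rw [hfd h, zero_add]
    exact hg h
  · rwa [add_zero]

theorem IsBlochPolya.coe_add_X_pow_mul {p : ℤ[X]} {g : ℤ⟦X⟧} {d : ℕ} (hp : IsBlochPolya p)
    (hd : p.natDegree < d) (hg : IsBlochPolya g) :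
    IsBlochPolya ((p : ℤ⟦X⟧) + X ^ d * g) := fun n =>
  coeff_add_X_pow_mul_mem (hp n)
    (fun h => by rw [Polynomial.coeff_coe, Polynomial.coeff_eq_zero_of_natDegree_lt (by omega)])
    (fun _ => hg _)

theorem IsBlochPolya.of_natDegree_lt {p : ℤ[X]} {N : ℕ} (hN : p.natDegree < N)
    (h : ∀ n < N, p.coeff n ∈ ({-1, 0, 1} : Set ℤ)) : IsBlochPolya p := fun n => by
  rw [Polynomial.coeff_coe]
  rcases lt_or_ge n N with hn | hn
  · exact h n hn
  · rw [Polynomial.coeff_eq_zero_of_natDegree_lt (by omega)]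
    simp

theorem coeff_coe_mul_one_add_X_pow (P : ℤ[X]) (m n : ℕ) :
    coeff n ((P : ℤ⟦X⟧) * (1 + X ^ m)) =
      P.coeff n + if m ≤ n then P.coeff (n - m) else 0 := by
  rw [mul_add, mul_one, mul_comm, map_add, coeff_X_pow_mul', Polynomial.coeff_coe,
    Polynomial.coeff_coe]

theorem IsBlochPolya.coe_mul_one_add_X_pow {P : ℤ[X]} (hP : IsBlochPolya P) {m : ℕ}
    (hm : P.natDegree < m) : IsBlochPolya ((P : ℤ⟦X⟧) * (1 + X ^ m)) := fun n => by
  have hP' (k : ℕ) := Polynomial.coeff_coe (φ := P) k ▸ hP k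
  rw [coeff_coe_mul_one_add_X_pow]
  split_ifs with h
  · rw [Polynomial.coeff_eq_zero_of_natDegree_lt (by omega), zero_add]
    exact hP' _
  · rw [add_zero]
    exact hP' n

theorem IsBlochPolya.coe_mul_qPochSum_self {P : ℤ[X]} (hP : IsBlochPolya P) {m : ℕ}
    (hm : P.natDegree < m) : IsBlochPolya ((P : ℤ⟦X⟧) * qPochSum m m) := by
  intro n
  induction n using Nat.strong_induction_on generalizing m with
  | _ n ih =>
  have hsplit : (P : ℤ⟦X⟧) * qPochSum m m =
      (P : ℤ⟦X⟧) * (1 + X ^ m) +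
        X ^ (3 * m + 1) * -((P : ℤ⟦X⟧) * qPochSum (m + 1) (m + 1)) := by
    rw [qPochSum_self (by omega)]
    ring
  rw [hsplit]
  refine coeff_add_X_pow_mul_mem (hP.coe_mul_one_add_X_pow hm n) (fun h => ?_) (fun h => ?_)
  · rw [coeff_coe_mul_one_add_X_pow, if_pos (by omega),
      Polynomial.coeff_eq_zero_of_natDegree_lt (by omega),
      Polynomial.coeff_eq_zero_of_natDegree_lt (by omega), add_zero]
  · rw [map_neg]
    exact neg_mem_neg_one_zero_one (ih _ (by omega) (by omega))

end BlochPolya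

section Concrete

open Polynomial

theorem qPochhammer_one_two : qPochhammer 1 2 = 1 - X - X ^ 2 + X ^ 3 := by
  simp only [qPochhammer, prod_range_succ, prod_range_zero]
  ring

theorem qPochhammer_one_three : qPochhammer 1 3 = 1 - X - X ^ 2 + X ^ 4 + X ^ 5 - X ^ 6 := by
  simp only [qPochhammer, prod_range_succ, prod_range_zero]
  ring

theorem natDegree_qPochhammer_one_two_lt : (qPochhammer 1 2).natDegree < 4 := by
  rw [qPochhammer_one_two, Nat.lt_succ_iff]
  compute_degree!

theorem natDegree_qPochhammer_one_three_lt : (qPochhammer 1 3).natDegree < 7 := by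
  rw [qPochhammer_one_three, Nat.lt_succ_iff]
  compute_degree!

theorem isBlochPolya_qPochhammer_one_two : IsBlochPolya (qPochhammer 1 2) :=
  .of_natDegree_lt natDegree_qPochhammer_one_two_lt fun n hn => by
    rw [qPochhammer_one_two]
    interval_cases n <;> simp [coeff_X, coeff_one, coeff_X_pow]

theorem isBlochPolya_qPochhammer_one_three : IsBlochPolya (qPochhammer 1 3) :=
  .of_natDegree_lt natDegree_qPochhammer_one_three_lt fun n hn => by
    rw [qPochhammer_one_three]
    interval_cases n <;> simp [coeff_X, coeff_one, coeff_X_pow]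

noncomputable def headThree : ℤ[X] :=
  1 + X ^ 3 - X ^ 4 + X ^ 6 - X ^ 7 - X ^ 8 + X ^ 9 - X ^ 10 - X ^ 11 + X ^ 12

noncomputable def headFour : ℤ[X] :=
  1 + X ^ 4 - X ^ 5 + X ^ 8 - X ^ 9 - X ^ 10 + X ^ 11 + X ^ 12 - X ^ 13 - X ^ 14 + X ^ 16
    - X ^ 18 + X ^ 20 + X ^ 21 - X ^ 22 - X ^ 25 + X ^ 26 + X ^ 27 - X ^ 29 - X ^ 30 + X ^ 31
    + X ^ 32 - X ^ 34 - X ^ 35 + X ^ 36 + X ^ 41 - X ^ 42 - X ^ 43 + X ^ 45 + X ^ 46 - X ^ 48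
    - X ^ 49 + X ^ 51 + X ^ 52 - X ^ 53

theorem natDegree_headThree_lt : headThree.natDegree < 16 := by
  rw [headThree, Nat.lt_succ_iff]
  compute_degree!

theorem natDegree_headFour_lt : headFour.natDegree < 60 := by
  rw [headFour, Nat.lt_succ_iff]
  compute_degree!

theorem isBlochPolya_headThree : IsBlochPolya headThree :=
  .of_natDegree_lt natDegree_headThree_lt fun n hn => by
    interval_cases n <;> simp [headThree, coeff_one, coeff_X_pow]

theorem isBlochPolya_headFour : IsBlochPolya headFour :=
  .of_natDegree_lt natDegree_headFour_lt fun n hn => by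
    interval_cases n <;> simp [headFour, coeff_one, coeff_X_pow]

theorem Fser_three_sub_eq :
    Fser 3 - PowerSeries.X ^ 9 = (headThree : ℤ⟦X⟧) +
      PowerSeries.X ^ 16 * -((qPochhammer 1 2 : ℤ⟦X⟧) * qPochSum 4 4) := by
  rw [Fser_eq_qPochSum, qPochSum_eq_first (a := 1) (by norm_num),
    qPochSum_eq_first (a := 2) (by norm_num), qPochSum_self (m := 3) (by norm_num),
    qPochhammer_one_two, headThree]
  push_cast
  ring

theorem Fser_four_sub_eq :
    Fser 4 - PowerSeries.X ^ 16 + PowerSeries.X ^ 18 + PowerSeries.X ^ 30 - PowerSeries.X ^ 31 =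
      (headFour : ℤ⟦X⟧) + PowerSeries.X ^ 60 * -((qPochhammer 1 3 : ℤ⟦X⟧) * qPochSum 7 7) := by
  rw [Fser_eq_qPochSum, qPochSum_eq_first (a := 1) (by norm_num),
    qPochSum_eq_first (a := 2) (by norm_num), qPochSum_eq_first (a := 3) (by norm_num),
    qPochSum_self (m := 4) (by norm_num), qPochSum_self (m := 5) (by norm_num),
    qPochSum_self (m := 6) (by norm_num), qPochhammer_one_three, headFour]
  push_cast
  ring

end Concrete

theorem F3_F4_blochPolya :
    (∀ n : ℕ, PowerSeries.coeff n
        (Fser 3 - (PowerSeries.X : PowerSeries ℤ) ^ 9) ∈ ({-1, 0, 1} : Set ℤ)) ∧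
      ∀ n : ℕ, PowerSeries.coeff n
        (Fser 4 - (PowerSeries.X : PowerSeries ℤ) ^ 16 + (PowerSeries.X : PowerSeries ℤ) ^ 18
          + (PowerSeries.X : PowerSeries ℤ) ^ 30 - (PowerSeries.X : PowerSeries ℤ) ^ 31)
        ∈ ({-1, 0, 1} : Set ℤ) := by
  constructor
  · rw [Fser_three_sub_eq]
    exact isBlochPolya_headThree.coe_add_X_pow_mul natDegree_headThree_lt
      (isBlochPolya_qPochhammer_one_two.coe_mul_qPochSum_self
        natDegree_qPochhammer_one_two_lt).neg
  · rw [Fser_four_sub_eq]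
    exact isBlochPolya_headFour.coe_add_X_pow_mul natDegree_headFour_lt
      (isBlochPolya_qPochhammer_one_three.coe_mul_qPochSum_self
        natDegree_qPochhammer_one_three_lt).neg
end

section
/- For every integer m > 69, the coefficient of q^{2m+69} in the polynomial (q;q)_{m-1} = ∏_{i=1}^{m-1}(1 - q^i) satisfies 2 ≤ [q^{2m+69}] (q;q)_{m-1} ≤ 6. -/
open Finset

theorem le_pentagonal_neg (k : ℕ) : k ≤ pentagonal (-k) := by
  have := two_mul_natCast_pentagonal_neg k
  have hk : (0 : ℤ) ≤ k := by positivity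
  zify
  nlinarith

theorem pentagonal_neg_le_pentagonal_neg {k l : ℕ} (h : k ≤ l) :
    pentagonal (-k) ≤ pentagonal (-l) :=
  pentagonal_strictAntiOn.antitoneOn (by simp) (by simp) (by omega)

theorem pentagonal_add_one_lt_pentagonal_neg {k l : ℕ} (h : k < l) :
    pentagonal (k + 1) < pentagonal (-l) := by
  have := pentagonal_neg_le_pentagonal_neg h
  push_cast at this
  exact (pentagonal_lt_pentagonal_neg (by positivity)).trans_le this

theorem card_filter_pentagonal_straddle_le_one (s : Finset ℕ) (M : ℕ) :
    (s.filter fun k : ℕ => pentagonal (-(k : ℤ)) ≤ M ∧ M < pentagonal ((k : ℤ) + 1)).card ≤ 1 := by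
  refine card_le_one.mpr fun a ha b hb => ?_
  simp only [mem_filter] at ha hb
  by_contra hab
  rcases Nat.lt_or_gt_of_ne hab with h | h
  · exact (pentagonal_add_one_lt_pentagonal_neg h).not_ge (hb.2.1.trans ha.2.2.le)
  · exact (pentagonal_add_one_lt_pentagonal_neg h).not_ge (ha.2.1.trans hb.2.2.le)

namespace PowerSeries

open WithPiTopology

theorem coeff_pentagonalSeries_eq_sum_range {R : Type*} [CommRing R] {n K : ℕ}
    (h : n < pentagonal (-K)) :
    (pentagonalSeries R).coeff n = ∑ k ∈ range K, (-1) ^ k *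
      ((if n = pentagonal (-k) then 1 else 0) - (if n = pentagonal (k + 1) then 1 else 0)) := by
  let _ : TopologicalSpace R := ⊥
  have _ : DiscreteTopology R := ⟨rfl⟩
  have hsum := (hasSum_pow_pentagonal_sub_pentagonalSeries R).map (coeff n) (continuous_coeff R n)
  have hC (k : ℕ) : (-1 : R⟦X⟧) ^ k = C ((-1 : R) ^ k) := by simp
  simp only [hC, Function.comp_def, coeff_C_mul, map_sub, coeff_X_pow] at hsum
  refine hsum.unique (hasSum_sum_of_ne_finset_zero fun k hk => ?_)
  have h₁ : n < pentagonal (-k) :=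
    h.trans_le (pentagonal_neg_le_pentagonal_neg (by simpa using hk))
  have h₂ := pentagonal_neg_lt_pentagonal_add_one (Int.natCast_nonneg k)
  simp [h₁.ne, (h₁.trans h₂).ne]

theorem abs_coeff_pentagonalSeries_le_one (n : ℕ) : |(pentagonalSeries ℤ).coeff n| ≤ 1 := by
  by_cases h : n ∈ Set.range pentagonal
  · obtain ⟨k, rfl⟩ := h
    simp
  · simp [coeff_pentagonalSeries_eq_zero ℤ h]

theorem abs_sum_range_coeff_pentagonalSeries_le_one (M : ℕ) :
    |∑ t ∈ range (M + 1), (pentagonalSeries ℤ).coeff t| ≤ 1 := by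
  have hsum : ∑ t ∈ range (M + 1), (pentagonalSeries ℤ).coeff t =
      ∑ k ∈ range (M + 1), (-1) ^ k * ((if pentagonal (-(k : ℤ)) ≤ M then 1 else 0) -
        (if pentagonal ((k : ℤ) + 1) ≤ M then 1 else 0)) := by
    rw [sum_congr rfl fun t ht => coeff_pentagonalSeries_eq_sum_range (K := M + 1)
      ((mem_range.mp ht).trans_le (le_pentagonal_neg _)), sum_comm]
    simp_rw [← mul_sum, sum_sub_distrib, sum_ite_eq', mem_range, Nat.lt_succ_iff]
  have hterm (k : ℕ) : ((if pentagonal (-(k : ℤ)) ≤ M then 1 else 0) -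
      (if pentagonal ((k : ℤ) + 1) ≤ M then 1 else 0) : ℤ) =
      if pentagonal (-(k : ℤ)) ≤ M ∧ M < pentagonal ((k : ℤ) + 1) then 1 else 0 := by
    have := pentagonal_neg_lt_pentagonal_add_one (Int.natCast_nonneg k)
    split_ifs <;> omega
  calc _ ≤ ∑ k ∈ range (M + 1), |(-1) ^ k * ((if pentagonal (-(k : ℤ)) ≤ M then 1 else 0) -
        (if pentagonal ((k : ℤ) + 1) ≤ M then 1 else 0) : ℤ)| :=
        hsum ▸ abs_sum_le_sum_abs _ _
    _ = ((range (M + 1)).filter fun k : ℕ =>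
          pentagonal (-(k : ℤ)) ≤ M ∧ M < pentagonal ((k : ℤ) + 1)).card := by
        simp [hterm, apply_ite (abs : ℤ → ℤ)]
    _ ≤ 1 := by exact_mod_cast card_filter_pentagonal_straddle_le_one _ M

theorem sum_pairs_coeff_pentagonalSeries_sixtyNine_sub :
    ∑ j ∈ range 70, ∑ i ∈ range (j + 1),
      (if i + j ≤ 69 then (pentagonalSeries ℤ).coeff (69 - (i + j)) else 0) = 4 := by
  have h77 : pentagonal (-(7 : ℕ)) = 77 := by decide
  have hE (n : ℕ) : (pentagonalSeries ℤ).coeff (69 - n) = ∑ k ∈ range 7, (-1) ^ k *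
      ((if 69 - n = pentagonal (-(k : ℤ)) then 1 else 0) -
        (if 69 - n = pentagonal ((k : ℤ) + 1) then 1 else 0)) :=
    coeff_pentagonalSeries_eq_sum_range (by rw [h77]; omega)
  simp only [hE]
  set_option maxRecDepth 100000 in decide

end PowerSeries

theorem pow_dvd_prod_one_sub_pow_sub_one {R ι : Type*} [CommRing R] (x : R) {s : Finset ι}
    {e : ι → ℕ} {a : ℕ} (h : ∀ i ∈ s, a ≤ e i) : x ^ a ∣ ∏ i ∈ s, (1 - x ^ e i) - 1 := by
  refine prod_induction _ (fun g => x ^ a ∣ g - 1) (fun g g' hg hg' => ?_) (by simp)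
    fun i hi => by simpa using pow_dvd_pow x (h i hi)
  simpa [mul_sub, sub_mul, mul_comm] using dvd_add (dvd_mul_of_dvd_left hg g') hg'

theorem pow_three_mul_dvd_prod_one_sub_pow_mul_sub_one {R : Type*} [CommRing R] (x : R)
    (m b : ℕ) :
    x ^ (3 * m) ∣ (∏ i ∈ range b, (1 - x ^ (m + i))) *
      (1 + ∑ i ∈ range b, x ^ (m + i) + ∑ j ∈ range b, ∑ i ∈ range (j + 1), x ^ (2 * m + (i + j)))
        - 1 := by
  induction b with
  | zero => simp
  | succ b ih =>
    set y := x ^ (m + b)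
    set S := ∑ i ∈ range b, x ^ (m + i)
    set H := ∑ j ∈ range b, ∑ i ∈ range (j + 1), x ^ (2 * m + (i + j))
    have hnew : ∑ i ∈ range (b + 1), x ^ (2 * m + (i + b)) = y * (S + y) := by
      rw [← sum_range_succ, mul_sum]
      exact sum_congr rfl fun i _ => by rw [← pow_add]; ring_nf
    have hy : x ^ m ∣ y := pow_dvd_pow x (by omega)
    have hS : x ^ m ∣ S := dvd_sum fun i _ => pow_dvd_pow x (by omega)
    have hH : x ^ (2 * m) ∣ H := dvd_sum fun j _ => dvd_sum fun i _ => pow_dvd_pow x (by omega)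
    have hrest : x ^ (3 * m) ∣ y * (H + y * S + y ^ 2) := by
      rw [show 3 * m = m + 2 * m by ring, pow_add]
      refine mul_dvd_mul hy (dvd_add (dvd_add hH ?_) ?_) <;> rw [pow_mul']
      · exact sq (x ^ m) ▸ mul_dvd_mul hy hS
      · exact pow_dvd_pow_of_dvd hy 2
    rw [prod_range_succ, sum_range_succ, sum_range_succ, hnew]
    -- `R (1 - y) (1 + S + y + H + y (S + y)) - 1 = (R (1 + S + H) - 1) - R y (H + y S + y²)`
    convert dvd_sub ih (dvd_mul_of_dvd_right hrest (∏ i ∈ range b, (1 - x ^ (m + i)))) using 1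
    ring

open Polynomial

theorem Polynomial.coeff_eq_of_X_pow_dvd_sub {R : Type*} [CommRing R] {f g : R[X]} {n : ℕ}
    (h : X ^ (n + 1) ∣ f - g) : f.coeff n = g.coeff n := by
  simpa [sub_eq_zero] using X_pow_dvd_iff.mp h n n.lt_succ_self

theorem coeff_qPoch {K n : ℕ} (h : n ≤ K) :
    (qPoch K).coeff n = (PowerSeries.pentagonalSeries ℤ).coeff n := by
  obtain ⟨s₀, hs₀⟩ :=
    Filter.eventually_atTop.mp (PowerSeries.coeff_prod_one_sub_X_pow_eventually_eq ℤ n)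
  set s := s₀ ∪ range K
  have hK : range K ⊆ s := subset_union_right
  rw [← hs₀ s subset_union_left, ← prod_sdiff hK]
  have hcast : ((∏ i ∈ s \ range K, (1 - PowerSeries.X ^ (i + 1))) *
      ∏ i ∈ range K, (1 - PowerSeries.X ^ (i + 1)) : PowerSeries ℤ) =
      ↑((∏ i ∈ s \ range K, (1 - X ^ (i + 1))) * qPoch K) := by
    rw [qPoch, ← coeToPowerSeries.ringHom_apply, map_mul, map_prod, map_prod]
    simp
  rw [hcast, Polynomial.coeff_coe]
  refine (coeff_eq_of_X_pow_dvd_sub ?_).symm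
  rw [← sub_one_mul]
  exact dvd_mul_of_dvd_left (pow_dvd_prod_one_sub_pow_sub_one _ fun i hi => by
    simp only [mem_sdiff, mem_range] at hi; omega) _

theorem coeff_qPoch_mul_X_pow {K n : ℕ} (h : n ≤ K) (e : ℕ) :
    (qPoch K * X ^ e).coeff n =
      if e ≤ n then (PowerSeries.pentagonalSeries ℤ).coeff (n - e) else 0 := by
  rw [coeff_mul_X_pow']
  split_ifs
  · exact coeff_qPoch (by omega)
  · rfl

theorem coeff_qPoch_mul_sum_X_pow (m b : ℕ) :
    (qPoch (m + b) * ∑ i ∈ range (b + 1), X ^ (m + i)).coeff (m + b) =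
      ∑ i ∈ range (b + 1), (PowerSeries.pentagonalSeries ℤ).coeff i := by
  rw [mul_sum, finsetSum_coeff, ← sum_range_reflect]
  refine sum_congr rfl fun i hi => ?_
  rw [mem_range] at hi
  rw [coeff_qPoch_mul_X_pow le_rfl, if_pos (by omega),
    show m + b - (m + (b + 1 - 1 - i)) = i by omega]

theorem coeff_qPoch_mul_sum_pairs_X_pow (m : ℕ) :
    (qPoch (2 * m + 69) * ∑ j ∈ range (m + 70), ∑ i ∈ range (j + 1), X ^ (2 * m + (i + j))).coeff
      (2 * m + 69) = 4 := by
  simp_rw [mul_sum, finsetSum_coeff, coeff_qPoch_mul_X_pow le_rfl]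
  rw [← sum_subset (range_subset_range.mpr (by omega : 70 ≤ m + 70)) fun j _ hj => ?_,
    ← PowerSeries.sum_pairs_coeff_pentagonalSeries_sixtyNine_sub]
  · refine sum_congr rfl fun j _ => sum_congr rfl fun i _ => ?_
    rw [show 2 * m + 69 - (2 * m + (i + j)) = 69 - (i + j) by omega]
    exact if_congr (by omega) rfl rfl
  · rw [mem_range] at hj
    exact sum_eq_zero fun i _ => if_neg (by omega)

theorem coeff_bound (m : ℕ) (hm : 69 < m) :
    2 ≤ (qPoch (m - 1)).coeff (2 * m + 69) ∧ (qPoch (m - 1)).coeff (2 * m + 69) ≤ 6 := by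
  set S := ∑ i ∈ range (m + 70), (X : ℤ[X]) ^ (m + i)
  set H := ∑ j ∈ range (m + 70), ∑ i ∈ range (j + 1), (X : ℤ[X]) ^ (2 * m + (i + j))
  have hsplit : qPoch (2 * m + 69) = qPoch (m - 1) * ∏ i ∈ range (m + 70), (1 - X ^ (m + i)) := by
    rw [qPoch, qPoch, show 2 * m + 69 = m - 1 + (m + 70) by omega, prod_range_add]
    congr 1
    exact prod_congr rfl fun i _ => by rw [show m - 1 + i + 1 = m + i by omega]
  have hcoeff : (qPoch (m - 1)).coeff (2 * m + 69) =
      (qPoch (2 * m + 69) * (1 + S + H)).coeff (2 * m + 69) := by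
    refine coeff_eq_of_X_pow_dvd_sub ?_
    rw [hsplit, mul_assoc, ← mul_one_sub, ← neg_sub, mul_neg, dvd_neg]
    exact dvd_mul_of_dvd_right ((pow_dvd_pow X (by omega)).trans
      (pow_three_mul_dvd_prod_one_sub_pow_mul_sub_one X m (m + 70))) _
  have hS := coeff_qPoch_mul_sum_X_pow m (m + 69)
  rw [show m + (m + 69) = 2 * m + 69 by ring] at hS
  obtain ⟨hN₁, hN₂⟩ := abs_le.mp (PowerSeries.abs_coeff_pentagonalSeries_le_one (2 * m + 69))
  obtain ⟨hP₁, hP₂⟩ := abs_le.mp (PowerSeries.abs_sum_range_coeff_pentagonalSeries_le_one (m + 69))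
  rw [hcoeff, mul_add, mul_add, mul_one, coeff_add, coeff_add, coeff_qPoch le_rfl, hS,
    coeff_qPoch_mul_sum_pairs_X_pow]
  constructor <;> linarith
end
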